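/- The maximum of two subsolutions of the infinity fractional Laplacian in an open set Ω is a subsolution: if u₁, u₂ are upper semicontinuous bounded functions with Δ^s_∞ u₁ ≥ 0 and Δ^s_∞ u₂ ≥ 0 in Ω in the viscosity sense, then w = max(u₁, u₂) satisfies Δ^s_∞ w ≥ 0 in Ω in the viscosity sense. -/

import Mathlib

open MeasureTheory Metric Set Real
open scoped Classical

noncomputable section

variable {N : ℕ}

/-- `φ` is `C^{1,1}` at `x₀` with (unique) gradient vector `p`. -/
def C11At (φ : EuclideanSpace ℝ (Fin N) → ℝ) (x₀ p : EuclideanSpace ℝ (Fin N)) : Prop :=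
  ∃ M η₀ : ℝ, 0 < M ∧ 0 < η₀ ∧ ∀ x : EuclideanSpace ℝ (Fin N), ‖x‖ < η₀ →
    |φ (x₀ + x) - φ x₀ - (inner ℝ p x : ℝ)| ≤ M * ‖x‖ ^ 2

/-- The one-sided integral `L(u,v,x) = ∫₀^∞ (u(x+ηv)-u(x))/η^{1+2s} dη`. -/
def halfInt (s : ℝ) (u : EuclideanSpace ℝ (Fin N) → ℝ) (x v : EuclideanSpace ℝ (Fin N)) : ℝ :=
  ∫ η in Set.Ioi (0 : ℝ), (u (x + η • v) - u x) / η ^ (1 + 2 * s)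

/-- The two-sided (second difference) integral in direction `v`. -/
def dirInt (s : ℝ) (u : EuclideanSpace ℝ (Fin N) → ℝ) (x v : EuclideanSpace ℝ (Fin N)) : ℝ :=
  ∫ η in Set.Ioi (0 : ℝ), (u (x + η • v) + u (x - η • v) - 2 * u x) / η ^ (1 + 2 * s)

/-- The infinity fractional Laplacian of `u` at `x`, where `p` plays the role of `∇u(x)`. -/
def IFL (s : ℝ) (u : EuclideanSpace ℝ (Fin N) → ℝ) (x p : EuclideanSpace ℝ (Fin N)) : ℝ :=
  if p = 0 then
    (⨆ y : Metric.sphere (0 : EuclideanSpace ℝ (Fin N)) 1,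
        halfInt s u x (y : EuclideanSpace ℝ (Fin N))) +
      (⨅ z : Metric.sphere (0 : EuclideanSpace ℝ (Fin N)) 1,
        halfInt s u x (-(z : EuclideanSpace ℝ (Fin N))))
  else dirInt s u x (‖p‖⁻¹ • p)

/-- Replacement of `u` by the test function `φ` inside `B_r(x₀)`. -/
def glue (u φ : EuclideanSpace ℝ (Fin N) → ℝ) (x₀ : EuclideanSpace ℝ (Fin N)) (r : ℝ) :
    EuclideanSpace ℝ (Fin N) → ℝ :=
  fun x => if x ∈ Metric.ball x₀ r then φ x else u x

/-- `u` is a viscosity subsolution of `Δ^s_∞ u = 0` at every point of `Ω`. -/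
def IsSubsol (s : ℝ) (Ω : Set (EuclideanSpace ℝ (Fin N)))
    (u : EuclideanSpace ℝ (Fin N) → ℝ) : Prop :=
  ∀ x₀ ∈ Ω, ∀ r > (0 : ℝ), ∀ φ : EuclideanSpace ℝ (Fin N) → ℝ,
    ∀ p : EuclideanSpace ℝ (Fin N),
    C11At φ x₀ p → ContinuousOn φ (Metric.closedBall x₀ r) → φ x₀ = u x₀ →
    (∀ x ∈ Metric.ball x₀ r, x ≠ x₀ → u x < φ x) →
    0 ≤ IFL s (glue u φ x₀ r) x₀ p

/-- `u` is a viscosity supersolution of `Δ^s_∞ u = 0` at every point of `Ω`. -/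
def IsSupersol (s : ℝ) (Ω : Set (EuclideanSpace ℝ (Fin N)))
    (u : EuclideanSpace ℝ (Fin N) → ℝ) : Prop :=
  ∀ x₀ ∈ Ω, ∀ r > (0 : ℝ), ∀ φ : EuclideanSpace ℝ (Fin N) → ℝ,
    ∀ p : EuclideanSpace ℝ (Fin N),
    C11At φ x₀ p → ContinuousOn φ (Metric.closedBall x₀ r) → φ x₀ = u x₀ →
    (∀ x ∈ Metric.ball x₀ r, x ≠ x₀ → φ x < u x) →
    IFL s (glue u φ x₀ r) x₀ p ≤ 0

/-- `u` is a viscosity subsolution at nonzero-gradient points in `Ω`. -/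
def IsSubsolNZ (s : ℝ) (Ω : Set (EuclideanSpace ℝ (Fin N)))
    (u : EuclideanSpace ℝ (Fin N) → ℝ) : Prop :=
  ∀ x₀ ∈ Ω, ∀ r > (0 : ℝ), ∀ φ : EuclideanSpace ℝ (Fin N) → ℝ,
    ∀ p : EuclideanSpace ℝ (Fin N), p ≠ 0 →
    C11At φ x₀ p → ContinuousOn φ (Metric.closedBall x₀ r) → φ x₀ = u x₀ →
    (∀ x ∈ Metric.ball x₀ r, x ≠ x₀ → u x < φ x) →
    0 ≤ dirInt s (glue u φ x₀ r) x₀ (‖p‖⁻¹ • p)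

/-- `u` is a viscosity supersolution at nonzero-gradient points in `Ω`. -/
def IsSupersolNZ (s : ℝ) (Ω : Set (EuclideanSpace ℝ (Fin N)))
    (u : EuclideanSpace ℝ (Fin N) → ℝ) : Prop :=
  ∀ x₀ ∈ Ω, ∀ r > (0 : ℝ), ∀ φ : EuclideanSpace ℝ (Fin N) → ℝ,
    ∀ p : EuclideanSpace ℝ (Fin N), p ≠ 0 →
    C11At φ x₀ p → ContinuousOn φ (Metric.closedBall x₀ r) → φ x₀ = u x₀ →
    (∀ x ∈ Metric.ball x₀ r, x ≠ x₀ → φ x < u x) →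
    dirInt s (glue u φ x₀ r) x₀ (‖p‖⁻¹ • p) ≤ 0

/-!
Where `u₁ x₀ ≥ u₂ x₀`, a test function touching `max u₁ u₂` from above at `x₀` also touches
`u₁` from above there, so the glued function built from `u₁` has `Δ^s_∞ ≥ 0` at `x₀`. Gluing
the same `φ` into the larger function `max u₁ u₂` keeps the value `φ x₀` at `x₀` and increases
every integrand pointwise, hence every one-sided and directional integral, hence `Δ^s_∞`.
The only analytic input is convergence: near `η = 0` the glued function is `φ`, whose first
(for zero gradient) or second differences are `O(η²)`, integrable against `η^{-1-2s}` since
`s < 1`; away from `0` boundedness and `s > 0` suffice. These bounds are uniform in the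
direction, which is what the supremum and infimum at zero-gradient points need.
-/

def fracMajorant (s δ M C η : ℝ) : ℝ :=
  if η < δ then M * η ^ (1 - 2 * s) else C * η ^ (-(1 + 2 * s))

section FracKernel

variable {s δ M C : ℝ} {f : ℝ → ℝ}

lemma integrableOn_fracMajorant (M C : ℝ) (hs0 : 0 < s) (hs1 : s < 1) (hδ : 0 < δ) :
    IntegrableOn (fracMajorant s δ M C) (Ioi 0) := by
  have hnear : IntegrableOn (fracMajorant s δ M C) (Ioo 0 δ) := by
    refine IntegrableOn.congr_fun ?_ (fun η hη => (if_pos hη.2).symm) measurableSet_Ioo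
    exact IntegrableOn.mono_set ((intervalIntegral.intervalIntegrable_rpow'
      (by linarith : (-1 : ℝ) < 1 - 2 * s)).1.const_mul M) Ioo_subset_Ioc_self
  have hfar : IntegrableOn (fracMajorant s δ M C) (Ici δ) := by
    refine IntegrableOn.congr_fun ?_ (fun η hη => (if_neg (not_lt.2 hη)).symm) measurableSet_Ici
    exact (integrableOn_Ici_iff_integrableOn_Ioi).2
      ((integrableOn_Ioi_rpow_of_lt (by linarith) hδ).const_mul C)
  rw [← Ioo_union_Ici_eq_Ioi hδ]
  exact hnear.union hfar

lemma abs_div_rpow_le_fracMajorant (hnear : ∀ η ∈ Ioo 0 δ, |f η| ≤ M * η ^ 2)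
    (hfar : ∀ η, δ ≤ η → |f η| ≤ C) {η : ℝ} (hη : 0 < η) :
    |f η / η ^ (1 + 2 * s)| ≤ fracMajorant s δ M C η := by
  have hpow : 0 < η ^ (1 + 2 * s) := rpow_pos_of_pos hη _
  rw [abs_div, abs_of_pos hpow, div_le_iff₀ hpow, fracMajorant]
  split_ifs with h
  · calc |f η| ≤ M * η ^ 2 := hnear η ⟨hη, h⟩
      _ = M * η ^ (1 - 2 * s) * η ^ (1 + 2 * s) := by
        rw [mul_assoc, ← rpow_add hη, ← rpow_natCast]; norm_num
  · calc |f η| ≤ C := hfar η (not_lt.1 h)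
      _ = C * η ^ (-(1 + 2 * s)) * η ^ (1 + 2 * s) := by
        rw [mul_assoc, ← rpow_add hη]; simp

lemma integrableOn_div_rpow (hs0 : 0 < s) (hs1 : s < 1) (hδ : 0 < δ) (hf : Measurable f)
    (hnear : ∀ η ∈ Ioo 0 δ, |f η| ≤ M * η ^ 2) (hfar : ∀ η, δ ≤ η → |f η| ≤ C) :
    IntegrableOn (fun η => f η / η ^ (1 + 2 * s)) (Ioi 0) :=
  (integrableOn_fracMajorant M C hs0 hs1 hδ).mono'
    (hf.div (measurable_id.pow_const _)).aestronglyMeasurable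
    ((ae_restrict_mem measurableSet_Ioi).mono fun _ hη =>
      abs_div_rpow_le_fracMajorant hnear hfar hη)

lemma abs_setIntegral_div_rpow_le (hs0 : 0 < s) (hs1 : s < 1) (hδ : 0 < δ) (hf : Measurable f)
    (hnear : ∀ η ∈ Ioo 0 δ, |f η| ≤ M * η ^ 2) (hfar : ∀ η, δ ≤ η → |f η| ≤ C) :
    |∫ η in Ioi 0, f η / η ^ (1 + 2 * s)| ≤ ∫ η in Ioi 0, fracMajorant s δ M C η :=
  abs_integral_le_integral_abs.trans <|
    setIntegral_mono_on (integrableOn_div_rpow hs0 hs1 hδ hf hnear hfar).abs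
      (integrableOn_fracMajorant M C hs0 hs1 hδ) measurableSet_Ioi
      fun _ hη => abs_div_rpow_le_fracMajorant hnear hfar hη

end FracKernel

section Euclidean

variable {s r : ℝ} {g g₁ g₂ u w φ : EuclideanSpace ℝ (Fin N) → ℝ}
  {x₀ p v : EuclideanSpace ℝ (Fin N)}

lemma norm_smul_of_norm_eq_one (hv : ‖v‖ = 1) {η : ℝ} (hη : 0 ≤ η) : ‖η • v‖ = η := by
  rw [norm_smul_of_nonneg hη, hv, mul_one]

lemma C11At.abs_sub_le_sq (hg : C11At g x₀ 0) :
    ∃ M δ, 0 < δ ∧ ∀ v : EuclideanSpace ℝ (Fin N), ‖v‖ = 1 →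
      ∀ η ∈ Ioo 0 δ, |g (x₀ + η • v) - g x₀| ≤ M * η ^ 2 := by
  obtain ⟨M, δ, -, hδ, hg⟩ := hg
  refine ⟨M, δ, hδ, fun v hv η hη => ?_⟩
  have hn := norm_smul_of_norm_eq_one hv hη.1.le
  simpa [hn] using hg (η • v) (by rw [hn]; exact hη.2)

lemma C11At.abs_secondDiff_le_sq (hg : C11At g x₀ p) :
    ∃ M δ, 0 < δ ∧ ∀ v : EuclideanSpace ℝ (Fin N), ‖v‖ = 1 →
      ∀ η ∈ Ioo 0 δ, |g (x₀ + η • v) + g (x₀ - η • v) - 2 * g x₀| ≤ M * η ^ 2 := by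
  obtain ⟨M, δ, -, hδ, hg⟩ := hg
  refine ⟨2 * M, δ, hδ, fun v hv η hη => ?_⟩
  have hn := norm_smul_of_norm_eq_one hv hη.1.le
  have hplus := hg (η • v) (by rw [hn]; exact hη.2)
  have hminus := hg (-(η • v)) (by rw [norm_neg, hn]; exact hη.2)
  rw [inner_neg_right, ← sub_eq_add_neg, norm_neg, sub_neg_eq_add] at hminus
  rw [hn] at hplus hminus
  -- the gradient terms `±⟪p, ηv⟫` cancel in the second difference
  calc |g (x₀ + η • v) + g (x₀ - η • v) - 2 * g x₀|
      = |(g (x₀ + η • v) - g x₀ - inner ℝ p (η • v)) +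
          (g (x₀ - η • v) - g x₀ + inner ℝ p (η • v))| := by ring_nf
    _ ≤ M * η ^ 2 + M * η ^ 2 := (abs_add_le _ _).trans (add_le_add hplus hminus)
    _ = 2 * M * η ^ 2 := by ring

lemma exists_halfInt_bound (hs0 : 0 < s) (hs1 : s < 1) (hg : Measurable g)
    (hgb : ∃ C, ∀ x, |g x| ≤ C) (hC11 : C11At g x₀ 0) :
    ∃ B, ∀ v : EuclideanSpace ℝ (Fin N), ‖v‖ = 1 →
      IntegrableOn (fun η => (g (x₀ + η • v) - g x₀) / η ^ (1 + 2 * s)) (Ioi 0) ∧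
      |halfInt s g x₀ v| ≤ B := by
  obtain ⟨C, hC⟩ := hgb
  obtain ⟨M, δ, hδ, hnear⟩ := hC11.abs_sub_le_sq
  have hfar : ∀ (v : EuclideanSpace ℝ (Fin N)) (η : ℝ), δ ≤ η →
      |g (x₀ + η • v) - g x₀| ≤ 2 * C := fun v η _ =>
    (abs_sub _ _).trans (by linarith [hC (x₀ + η • v), hC x₀])
  have hmeas (v : EuclideanSpace ℝ (Fin N)) :
      Measurable fun η : ℝ => g (x₀ + η • v) - g x₀ :=
    (hg.comp (by fun_prop)).sub_const _
  exact ⟨∫ η in Ioi 0, fracMajorant s δ M (2 * C) η, fun v hv =>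
    ⟨integrableOn_div_rpow hs0 hs1 hδ (hmeas v) (hnear v hv) (hfar v),
      abs_setIntegral_div_rpow_le hs0 hs1 hδ (hmeas v) (hnear v hv) (hfar v)⟩⟩

lemma integrableOn_dirInt_integrand (hs0 : 0 < s) (hs1 : s < 1) (hg : Measurable g)
    (hgb : ∃ C, ∀ x, |g x| ≤ C) (hC11 : C11At g x₀ p) (hv : ‖v‖ = 1) :
    IntegrableOn (fun η => (g (x₀ + η • v) + g (x₀ - η • v) - 2 * g x₀) / η ^ (1 + 2 * s))
      (Ioi 0) := by
  obtain ⟨C, hC⟩ := hgb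
  obtain ⟨M, δ, hδ, hnear⟩ := hC11.abs_secondDiff_le_sq
  refine integrableOn_div_rpow (C := 4 * C) hs0 hs1 hδ ?_ (hnear v hv) fun η _ => ?_
  · exact ((hg.comp (by fun_prop)).add (hg.comp (by fun_prop))).sub_const _
  · have := abs_sub (g (x₀ + η • v) + g (x₀ - η • v)) (2 * g x₀)
    have := abs_add_le (g (x₀ + η • v)) (g (x₀ - η • v))
    rw [abs_mul, abs_two] at *
    linarith [hC (x₀ + η • v), hC (x₀ - η • v), hC x₀]

lemma halfInt_mono
    (h₁ : IntegrableOn (fun η => (g₁ (x₀ + η • v) - g₁ x₀) / η ^ (1 + 2 * s)) (Ioi 0))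
    (h₂ : IntegrableOn (fun η => (g₂ (x₀ + η • v) - g₂ x₀) / η ^ (1 + 2 * s)) (Ioi 0))
    (hle : g₁ ≤ g₂) (heq : g₁ x₀ = g₂ x₀) : halfInt s g₁ x₀ v ≤ halfInt s g₂ x₀ v :=
  setIntegral_mono_on h₁ h₂ measurableSet_Ioi fun η hη =>
    div_le_div_of_nonneg_right (by rw [heq]; exact sub_le_sub_right (hle _) _)
      (rpow_pos_of_pos hη _).le

lemma dirInt_mono
    (h₁ : IntegrableOn (fun η => (g₁ (x₀ + η • v) + g₁ (x₀ - η • v) - 2 * g₁ x₀) /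
      η ^ (1 + 2 * s)) (Ioi 0))
    (h₂ : IntegrableOn (fun η => (g₂ (x₀ + η • v) + g₂ (x₀ - η • v) - 2 * g₂ x₀) /
      η ^ (1 + 2 * s)) (Ioi 0))
    (hle : g₁ ≤ g₂) (heq : g₁ x₀ = g₂ x₀) : dirInt s g₁ x₀ v ≤ dirInt s g₂ x₀ v :=
  setIntegral_mono_on h₁ h₂ measurableSet_Ioi fun η hη =>
    div_le_div_of_nonneg_right
      (by rw [heq]; exact sub_le_sub_right (add_le_add (hle _) (hle _)) _)
      (rpow_pos_of_pos hη _).le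

lemma IFL_mono (hs0 : 0 < s) (hs1 : s < 1) (hg₁ : Measurable g₁) (hg₂ : Measurable g₂)
    (hb₁ : ∃ C, ∀ x, |g₁ x| ≤ C) (hb₂ : ∃ C, ∀ x, |g₂ x| ≤ C)
    (hC₁ : C11At g₁ x₀ p) (hC₂ : C11At g₂ x₀ p) (hle : g₁ ≤ g₂) (heq : g₁ x₀ = g₂ x₀) :
    IFL s g₁ x₀ p ≤ IFL s g₂ x₀ p := by
  by_cases hp : p = 0
  · subst hp
    obtain ⟨B₁, hB₁⟩ := exists_halfInt_bound hs0 hs1 hg₁ hb₁ hC₁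
    obtain ⟨B₂, hB₂⟩ := exists_halfInt_bound hs0 hs1 hg₂ hb₂ hC₂
    have hmono (v : EuclideanSpace ℝ (Fin N)) (hv : ‖v‖ = 1) :
        halfInt s g₁ x₀ v ≤ halfInt s g₂ x₀ v :=
      halfInt_mono (hB₁ v hv).1 (hB₂ v hv).1 hle heq
    have hnorm (y : sphere (0 : EuclideanSpace ℝ (Fin N)) 1) : ‖(y : EuclideanSpace ℝ (Fin N))‖ = 1 :=
      mem_sphere_zero_iff_norm.1 y.2
    have hnorm_neg (y : sphere (0 : EuclideanSpace ℝ (Fin N)) 1) :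
        ‖-(y : EuclideanSpace ℝ (Fin N))‖ = 1 := by rw [norm_neg, hnorm]
    simp only [IFL, if_true]
    refine add_le_add (ciSup_mono ⟨B₂, ?_⟩ fun y => hmono _ (hnorm y))
      (ciInf_mono ⟨-B₁, ?_⟩ fun z => hmono _ (hnorm_neg z))
    · rintro _ ⟨y, rfl⟩
      exact (abs_le.1 (hB₂ _ (hnorm y)).2).2
    · rintro _ ⟨z, rfl⟩
      exact (abs_le.1 (hB₁ _ (hnorm_neg z)).2).1
  · have hv : ‖‖p‖⁻¹ • p‖ = 1 := by
      rw [norm_smul, norm_inv, norm_norm, inv_mul_cancel₀ (norm_ne_zero_iff.2 hp)]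
    simp only [IFL, if_neg hp]
    exact dirInt_mono (integrableOn_dirInt_integrand hs0 hs1 hg₁ hb₁ hC₁ hv)
      (integrableOn_dirInt_integrand hs0 hs1 hg₂ hb₂ hC₂ hv) hle heq

lemma glue_add_of_norm_lt {a : EuclideanSpace ℝ (Fin N)} (ha : ‖a‖ < r) :
    glue u φ x₀ r (x₀ + a) = φ (x₀ + a) :=
  if_pos (by rwa [mem_ball, dist_eq_norm, add_sub_cancel_left])

lemma glue_self (hr : 0 < r) : glue u φ x₀ r x₀ = φ x₀ := by
  simpa using glue_add_of_norm_lt (u := u) (φ := φ) (x₀ := x₀) (a := 0) (by simpa using hr)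

lemma glue_mono (huw : u ≤ w) : glue u φ x₀ r ≤ glue w φ x₀ r := fun x => by
  unfold glue
  split_ifs
  exacts [le_rfl, huw x]

lemma measurable_glue (hφ : ContinuousOn φ (closedBall x₀ r)) (hu : Measurable u) :
    Measurable (glue u φ x₀ r) := by
  refine measurable_of_restrict_of_restrict_compl (measurableSet_ball (x := x₀) (ε := r)) ?_ ?_
  · rw [show (ball x₀ r).domRestrict (glue u φ x₀ r) = (ball x₀ r).domRestrict φ from
      funext fun x => if_pos x.2]
    exact (hφ.mono ball_subset_closedBall).domRestrict.measurable
  · rw [show (ball x₀ r)ᶜ.domRestrict (glue u φ x₀ r) = (ball x₀ r)ᶜ.domRestrict u from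
      funext fun x => if_neg x.2]
    exact hu.comp measurable_subtype_coe

lemma exists_abs_glue_le (hφ : ContinuousOn φ (closedBall x₀ r)) (hu : ∃ K, ∀ x, |u x| ≤ K) :
    ∃ C, ∀ x, |glue u φ x₀ r x| ≤ C := by
  obtain ⟨K, hK⟩ := hu
  obtain ⟨Cφ, hCφ⟩ := (isCompact_closedBall x₀ r).exists_bound_of_continuousOn hφ
  refine ⟨max K Cφ, fun x => ?_⟩
  unfold glue
  split_ifs with hx
  · exact (hCφ x (ball_subset_closedBall hx)).trans (le_max_right _ _)
  · exact (hK x).trans (le_max_left _ _)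

lemma C11At.glue (hφ : C11At φ x₀ p) (hr : 0 < r) : C11At (glue u φ x₀ r) x₀ p := by
  obtain ⟨M, η₀, hM, hη₀, hφM⟩ := hφ
  refine ⟨M, min η₀ r, hM, lt_min hη₀ hr, fun x hx => ?_⟩
  rw [glue_add_of_norm_lt (hx.trans_le (min_le_right _ _)), glue_self hr]
  exact hφM x (hx.trans_le (min_le_left _ _))

lemma IsSubsol.of_le {Ω : Set (EuclideanSpace ℝ (Fin N))} (hs0 : 0 < s) (hs1 : s < 1)
    (hu : IsSubsol s Ω u) (hum : Measurable u) (hwm : Measurable w)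
    (hub : ∃ K, ∀ x, |u x| ≤ K) (hwb : ∃ K, ∀ x, |w x| ≤ K)
    (huw : u ≤ w) (hx₀ : x₀ ∈ Ω) (heq : u x₀ = w x₀) : IsSubsol s {x₀} w := by
  intro x hx r hr φ p hφ hφc hφx₀ htouch
  subst x
  calc 0 ≤ IFL s (glue u φ x₀ r) x₀ p :=
        hu x₀ hx₀ r hr φ p hφ hφc (hφx₀.trans heq.symm)
          fun x hx hne => (huw x).trans_lt (htouch x hx hne)
    _ ≤ IFL s (glue w φ x₀ r) x₀ p :=
        IFL_mono hs0 hs1 (measurable_glue hφc hum) (measurable_glue hφc hwm)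
          (exists_abs_glue_le hφc hub) (exists_abs_glue_le hφc hwb) (hφ.glue hr) (hφ.glue hr)
          (glue_mono huw) (by rw [glue_self hr, glue_self hr])

end Euclidean

theorem stmt_6_general {N : ℕ} (s : ℝ) (hs : 1 / 2 < s) (hs1 : s < 1)
    (Ω : Set (EuclideanSpace ℝ (Fin N)))
    (u₁ u₂ : EuclideanSpace ℝ (Fin N) → ℝ)
    (h₁usc : UpperSemicontinuous u₁) (h₂usc : UpperSemicontinuous u₂)
    (h₁bdd : ∃ K : ℝ, ∀ x, |u₁ x| ≤ K) (h₂bdd : ∃ K : ℝ, ∀ x, |u₂ x| ≤ K)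
    (h₁ : IsSubsol s Ω u₁) (h₂ : IsSubsol s Ω u₂) :
    IsSubsol s Ω (fun x => max (u₁ x) (u₂ x)) := by
  have hs0 : 0 < s := by linarith
  have hm₁ := h₁usc.measurable
  have hm₂ := h₂usc.measurable
  have hmax_bdd : ∃ K : ℝ, ∀ x, |max (u₁ x) (u₂ x)| ≤ K := by
    obtain ⟨K₁, hK₁⟩ := h₁bdd
    obtain ⟨K₂, hK₂⟩ := h₂bdd
    exact ⟨max K₁ K₂, fun x => abs_max_le_max_abs_abs.trans (max_le_max (hK₁ x) (hK₂ x))⟩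
  intro x₀ hx₀
  rcases le_total (u₂ x₀) (u₁ x₀) with h | h
  · exact h₁.of_le hs0 hs1 hm₁ (hm₁.max hm₂) h₁bdd hmax_bdd (fun x => le_max_left _ _) hx₀
      (max_eq_left h).symm x₀ rfl
  · exact h₂.of_le hs0 hs1 hm₂ (hm₁.max hm₂) h₂bdd hmax_bdd (fun x => le_max_right _ _) hx₀
      (max_eq_right h).symm x₀ rfl

/-- the maximum of two bounded upper semicontinuous viscosity subsolutions
of the infinity fractional Laplacian in an open set `Ω` is again a subsolution. -/
theorem stmt_6 {N : ℕ} (s : ℝ) (hs : 1 / 2 < s) (hs1 : s < 1)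
    (Ω : Set (EuclideanSpace ℝ (Fin N))) (hΩ : IsOpen Ω)
    (u₁ u₂ : EuclideanSpace ℝ (Fin N) → ℝ)
    (h₁usc : UpperSemicontinuous u₁) (h₂usc : UpperSemicontinuous u₂)
    (h₁bdd : ∃ K : ℝ, ∀ x, |u₁ x| ≤ K) (h₂bdd : ∃ K : ℝ, ∀ x, |u₂ x| ≤ K)
    (h₁ : IsSubsol s Ω u₁) (h₂ : IsSubsol s Ω u₂) :
    IsSubsol s Ω (fun x => max (u₁ x) (u₂ x)) :=
  stmt_6_general s hs hs1 Ω u₁ u₂ h₁usc h₂usc h₁bdd h₂bdd h₁ h₂
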